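/- arXiv:1508.05777 — 2 statements merged into one kernel-verified Lean document; each statement's English description precedes it below -/
import Mathlib

section
/- For every k ≥ 2 and n = k + 2, in the game Nim^1_{n,≤k} (slow Moore's Nim), a position x = (x_1, …, x_n) with 0 ≤ x_1 ≤ … ≤ x_n is a P-position of normal play (i.e. G(x) = 0) if and only if either all coordinates x_i are even, or x_1 is even and x_2, …, x_n are all odd. -/
/-- The minimum excludant of a set of natural numbers. -/
noncomputable def mex (S : Set ℕ) : ℕ := sInf {n : ℕ | n ∉ S}

/-- A move in slow Moore's Nim `Nim¹_{n,≤k}`: at least `1` and at most `k`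
coordinates, each strictly positive, are decreased by one token. -/
def MooreMove (n k : ℕ) (x y : Fin n → ℕ) : Prop :=
  (∀ i, y i ≤ x i ∧ x i ≤ y i + 1) ∧
  1 ≤ (Finset.univ.filter fun i => y i < x i).card ∧
  (Finset.univ.filter fun i => y i < x i).card ≤ k

theorem MooreMove.sum_lt {n k : ℕ} {x y : Fin n → ℕ} (h : MooreMove n k x y) :
    ∑ i, y i < ∑ i, x i := by
  obtain ⟨h1, h2, -⟩ := h
  obtain ⟨i, hi⟩ := Finset.card_pos.mp h2
  rw [Finset.mem_filter] at hi
  exact Finset.sum_lt_sum (fun j _ => (h1 j).1) ⟨i, Finset.mem_univ i, hi.2⟩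

/-- The normal-play Sprague–Grundy function of slow Moore's Nim:
`G(x) = mex {G(y) : y reachable from x in one move}`. -/
noncomputable def mooreG (n k : ℕ) (x : Fin n → ℕ) : ℕ :=
  mex (Set.range fun y : {y : Fin n → ℕ // MooreMove n k x y} => mooreG n k y.1)
termination_by ∑ i, x i
decreasing_by exact y.2.sum_lt

/-- Auxiliary predicate: all coordinates even, or exactly one even coordinate
which is minimal. -/
def Qpos (n : ℕ) (x : Fin n → ℕ) : Prop :=
  (∀ i, Even (x i)) ∨
    (∃ j, Even (x j) ∧ (∀ i, i ≠ j → Odd (x i)) ∧ ∀ i, x j ≤ x i)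

lemma mooreG_le_sum (n k : ℕ) (x : Fin n → ℕ) : mooreG n k x ≤ ∑ i, x i := by
  rw [mooreG, mex]
  apply Nat.sInf_le
  simp only [Set.mem_setOf_eq, Set.mem_range, not_exists]
  rintro ⟨y, hy⟩ h
  simp only at h
  have h1 : mooreG n k y ≤ ∑ i, y i := mooreG_le_sum n k y
  have h2 := hy.sum_lt
  omega
termination_by ∑ i, x i
decreasing_by exact hy.sum_lt

lemma mooreG_eq_zero_iff (n k : ℕ) (x : Fin n → ℕ) :
    mooreG n k x = 0 ↔ ¬ ∃ y, MooreMove n k x y ∧ mooreG n k y = 0 := by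
  rw [mooreG, mex, Nat.sInf_eq_zero]
  constructor
  · rintro (h | h)
    · simp only [Set.mem_setOf_eq, Set.mem_range, not_exists] at h
      rintro ⟨y, hy, hy0⟩
      exact h ⟨y, hy⟩ hy0
    · exfalso
      have hmem : (∑ i, x i) ∈ {m : ℕ |
          m ∉ Set.range fun y : {y : Fin n → ℕ // MooreMove n k x y} => mooreG n k y.1} := by
        simp only [Set.mem_setOf_eq, Set.mem_range, not_exists]
        rintro ⟨y, hy⟩ hval
        have h1 := mooreG_le_sum n k y
        have h2 := hy.sum_lt
        simp only at hval
        omega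
      rw [h] at hmem
      exact hmem
  · intro h
    left
    simp only [Set.mem_setOf_eq, Set.mem_range, not_exists]
    rintro ⟨y, hy⟩ hval
    exact h ⟨y, hy, hval⟩

lemma move_of {n k : ℕ} (x : Fin n → ℕ) (s : Finset (Fin n)) (hs : ∀ i ∈ s, 0 < x i)
    (hc1 : 1 ≤ s.card) (hc2 : s.card ≤ k) :
    MooreMove n k x (fun i => if i ∈ s then x i - 1 else x i) := by
  have hfil : (Finset.univ.filter fun i => (if i ∈ s then x i - 1 else x i) < x i) = s := by
    ext i
    simp only [Finset.mem_filter, Finset.mem_univ, true_and]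
    by_cases hi : i ∈ s
    · simp only [hi, if_true, iff_true]
      have := hs i hi; omega
    · simp [hi]
  refine ⟨fun i => ?_, ?_, ?_⟩
  · by_cases hi : i ∈ s <;> simp [hi] <;> omega
  · rw [hfil]; exact hc1
  · rw [hfil]; exact hc2

lemma moveA (k : ℕ) (hk : 2 ≤ k) {x y : Fin (k + 2) → ℕ} (hx : Qpos (k + 2) x)
    (h : MooreMove (k + 2) k x y) : ¬ Qpos (k + 2) y := by
  obtain ⟨h1, h2, h3⟩ := h
  set F := Finset.univ.filter (fun i => y i < x i) with hF
  have hmemF : ∀ i, i ∈ F ↔ y i < x i := by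
    intro i; simp [hF]
  have hbig : ∀ j : Fin (k + 2), ¬ (Finset.univ \ {j} ⊆ F) := by
    intro j hsub
    have hc := Finset.card_le_card hsub
    rw [Finset.card_sdiff_of_subset (Finset.subset_univ _), Finset.card_singleton,
      Finset.card_univ, Fintype.card_fin] at hc
    omega
  rintro (hy1 | ⟨j', hj'e, hj'o, hj'm⟩)
  · -- all y even
    rcases hx with hx1 | ⟨j, hje, hjo, hjm⟩
    · -- all x even: any i ∈ F gives parity contradiction
      obtain ⟨i, hi⟩ := Finset.card_pos.mp h2
      rw [hmemF] at hi
      have e1 := Nat.even_iff.mp (hx1 i)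
      have e2 := Nat.even_iff.mp (hy1 i)
      have e3 := (h1 i).2
      omega
    · apply hbig j
      intro i hi
      simp only [Finset.mem_sdiff, Finset.mem_singleton, Finset.mem_univ, true_and] at hi
      rw [hmemF]
      have e1 := Nat.odd_iff.mp (hjo i hi)
      have e2 := Nat.even_iff.mp (hy1 i)
      have e3 := (h1 i).1
      omega
  · -- y has unique even min j'
    rcases hx with hx1 | ⟨j, hje, hjo, hjm⟩
    · -- all x even: all i ≠ j' must be in F
      apply hbig j'
      intro i hi
      simp only [Finset.mem_sdiff, Finset.mem_singleton, Finset.mem_univ, true_and] at hi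
      rw [hmemF]
      have e1 := Nat.even_iff.mp (hx1 i)
      have e2 := Nat.odd_iff.mp (hj'o i hi)
      have e3 := (h1 i).1
      omega
    · by_cases hjj : j' = j
      · subst hjj
        -- j' ∉ F, and every other i ∉ F, so F empty: contradiction with card ≥ 1
        obtain ⟨i, hi⟩ := Finset.card_pos.mp h2
        rw [hmemF] at hi
        by_cases hij : i = j'
        · subst hij
          have e1 := Nat.even_iff.mp hje
          have e2 := Nat.even_iff.mp hj'e
          have e3 := (h1 i).2
          omega
        · have e1 := Nat.odd_iff.mp (hjo i hij)
          have e2 := Nat.odd_iff.mp (hj'o i hij)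
          have e3 := (h1 i).2
          omega
      · -- j' ≠ j
        have hxj' := Nat.odd_iff.mp (hjo j' hjj)
        have hyj' := Nat.even_iff.mp hj'e
        have hyj := Nat.odd_iff.mp (hj'o j (fun e => hjj e.symm))
        have hxj := Nat.even_iff.mp hje
        have i1 := h1 j'
        have i2 := h1 j
        have i3 := hjm j'
        have i4 := hj'm j
        omega

lemma moveB (k : ℕ) (hk : 2 ≤ k) {x : Fin (k + 2) → ℕ} (hx : ¬ Qpos (k + 2) x) :
    ∃ y, MooreMove (k + 2) k x y ∧ Qpos (k + 2) y := by
  classical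
  by_cases hall : ∀ i, Odd (x i)
  · -- all odd: decrease the minimum by one
    obtain ⟨m, -, hm⟩ := Finset.exists_min_image Finset.univ x ⟨0, Finset.mem_univ 0⟩
    have hpos : 0 < x m := by have := Nat.odd_iff.mp (hall m); omega
    refine ⟨_, move_of x {m} ?_ (by simp) (by simp; omega), ?_⟩
    · intro i hi
      rw [Finset.mem_singleton] at hi
      subst hi
      exact hpos
    right
    refine ⟨m, ?_, ?_, ?_⟩
    · simp only [Finset.mem_singleton, if_true]
      rw [Nat.even_iff]
      have := Nat.odd_iff.mp (hall m)
      omega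
    · intro i him
      simp only [Finset.mem_singleton, him, if_false]
      exact hall i
    · intro i
      by_cases hi : i = m
      · subst hi; simp
      · simp only [Finset.mem_singleton, hi, if_false, if_true]
        have := hm i (Finset.mem_univ i)
        omega
  · push_neg at hall
    obtain ⟨j0, hj0⟩ := hall
    have hj0e : Even (x j0) := Nat.not_odd_iff_even.mp hj0
    set O := Finset.univ.filter (fun i => Odd (x i)) with hO
    have hmemO : ∀ i, i ∈ O ↔ Odd (x i) := by intro i; simp [hO]
    by_cases hOc : O.card ≤ k
    · -- decrease all odd coordinates
      have hOne : O.Nonempty := by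
        rw [Finset.nonempty_iff_ne_empty]
        intro he
        apply hx; left
        intro i
        have : i ∉ O := by rw [he]; exact Finset.notMem_empty i
        rw [hmemO] at this
        exact Nat.not_odd_iff_even.mp this
      refine ⟨_, move_of x O ?_ (Finset.card_pos.mpr hOne) hOc, ?_⟩
      · intro i hi
        rw [hmemO] at hi
        have := Nat.odd_iff.mp hi
        omega
      left
      intro i
      by_cases hi : i ∈ O
      · simp only [hi, if_true]
        rw [Nat.even_iff]
        have := Nat.odd_iff.mp ((hmemO i).mp hi)
        omega
      · simp only [hi, if_false]
        rw [hmemO] at hi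
        exact Nat.not_odd_iff_even.mp hi
    · -- O.card ≥ k+1 : all coordinates except j0 are odd
      push_neg at hOc
      have hj0O : j0 ∉ O := by rw [hmemO]; exact hj0
      have hsub : O ⊆ Finset.univ \ {j0} := by
        intro i hi
        simp only [Finset.mem_sdiff, Finset.mem_univ, Finset.mem_singleton, true_and]
        intro he; subst he; exact hj0O hi
      have hcard : (Finset.univ \ {j0} : Finset (Fin (k + 2))).card = k + 1 := by
        rw [Finset.card_sdiff_of_subset (Finset.subset_univ _), Finset.card_singleton,
          Finset.card_univ, Fintype.card_fin]
        omega
      have hOeq : O = Finset.univ \ {j0} :=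
        Finset.eq_of_subset_of_card_le hsub (by omega)
      have hodd : ∀ i, i ≠ j0 → Odd (x i) := by
        intro i hi
        rw [← hmemO, hOeq]
        simp [hi]
      -- x j0 is not the minimum (else Qpos x)
      have hnotmin : ∃ i, x i < x j0 := by
        by_contra hc
        push_neg at hc
        exact hx (Or.inr ⟨j0, hj0e, hodd, hc⟩)
      obtain ⟨m, -, hm⟩ := Finset.exists_min_image Finset.univ x ⟨0, Finset.mem_univ 0⟩
      obtain ⟨i0, hi0⟩ := hnotmin
      have hmlt : x m < x j0 := lt_of_le_of_lt (hm i0 (Finset.mem_univ i0)) hi0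
      have hmj0 : m ≠ j0 := by intro e; rw [e] at hmlt; omega
      have hmodd := Nat.odd_iff.mp (hodd m hmj0)
      have hj0even := Nat.even_iff.mp hj0e
      have hcard2 : ({j0, m} : Finset (Fin (k + 2))).card = 2 := by
        rw [Finset.card_insert_of_notMem (by simp [Ne.symm hmj0]), Finset.card_singleton]
      refine ⟨_, move_of x {j0, m} ?_ (by omega) (by omega), ?_⟩
      · intro i hi
        simp only [Finset.mem_insert, Finset.mem_singleton] at hi
        rcases hi with rfl | rfl
        · omega
        · omega
      · right
        refine ⟨m, ?_, ?_, ?_⟩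
        · have : m ∈ ({j0, m} : Finset (Fin (k + 2))) := by simp
          simp only [this, if_true]
          rw [Nat.even_iff]; omega
        · intro i him
          by_cases hi : i ∈ ({j0, m} : Finset (Fin (k + 2)))
          · simp only [hi, if_true]
            have : i = j0 := by
              simp only [Finset.mem_insert, Finset.mem_singleton] at hi
              tauto
            subst this
            rw [Nat.odd_iff]; omega
          · simp only [hi, if_false]
            have : i ≠ j0 := by
              intro e; subst e; exact hi (by simp)
            exact hodd i this
        · intro i
          have hmmem : m ∈ ({j0, m} : Finset (Fin (k + 2))) := by simp
          simp only [hmmem, if_true]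
          by_cases hi : i ∈ ({j0, m} : Finset (Fin (k + 2)))
          · simp only [hi, if_true]
            simp only [Finset.mem_insert, Finset.mem_singleton] at hi
            rcases hi with rfl | rfl
            · omega
            · omega
          · simp only [hi, if_false]
            have := hm i (Finset.mem_univ i)
            omega

lemma mooreG_zero_iff_Qpos (k : ℕ) (hk : 2 ≤ k) (x : Fin (k + 2) → ℕ) :
    mooreG (k + 2) k x = 0 ↔ Qpos (k + 2) x := by
  rw [mooreG_eq_zero_iff]
  constructor
  · intro h
    by_contra hQ
    obtain ⟨y, hy, hQy⟩ := moveB k hk hQ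
    exact h ⟨y, hy, (mooreG_zero_iff_Qpos k hk y).mpr hQy⟩
  · rintro hQ ⟨y, hy, hy0⟩
    exact moveA k hk hQ hy ((mooreG_zero_iff_Qpos k hk y).mp hy0)
termination_by ∑ i, x i
decreasing_by
  · exact hy.sum_lt
  · exact hy.sum_lt

/-- In `Nim¹_{k+2,≤k}` (`k ≥ 2`), a nondecreasing position is a P-position of
normal play iff all coordinates are even, or the smallest coordinate is even
and all other coordinates are odd. -/
theorem stmt4 (k : ℕ) (hk : 2 ≤ k) (x : Fin (k + 2) → ℕ) (hx : Monotone x) :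
    mooreG (k + 2) k x = 0 ↔
      (∀ i, Even (x i)) ∨ (Even (x 0) ∧ ∀ i, i ≠ 0 → Odd (x i)) := by
  rw [mooreG_zero_iff_Qpos k hk x]
  constructor
  · rintro (h | ⟨j, hje, hjo, hjm⟩)
    · exact Or.inl h
    · right
      by_cases hj : j = 0
      · subst hj; exact ⟨hje, hjo⟩
      · exfalso
        have h0j : x 0 ≤ x j := hx (Fin.zero_le j)
        have hj0 : x j ≤ x 0 := hjm 0
        have hx0 : x 0 = x j := le_antisymm h0j hj0
        have ho := Nat.odd_iff.mp (hjo 0 (fun e => hj e.symm))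
        have he := Nat.even_iff.mp hje
        omega
  · rintro (h | ⟨h0, ho⟩)
    · exact Or.inl h
    · exact Or.inr ⟨0, h0, ho, fun i => hx (Fin.zero_le i)⟩
end

section
/- In the game Nim^1_{3,=2}, let x = (x_1, x_2, x_3) be a position with 0 ≤ x_1 ≤ x_2 ≤ x_3 and x_1 = 0. Then G(x) = 0 and G⁻(x) = 1 if x_2 is even, and G(x) = 1 and G⁻(x) = 0 if x_2 is odd. -/
/-- A move in slow exact 2-Nim on 3 piles `Nim¹_{3,=2}`: exactly two
strictly positive coordinates are decreased by one token. -/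
def ExactMove (x y : Fin 3 → ℕ) : Prop :=
  (∀ i, y i ≤ x i ∧ x i ≤ y i + 1) ∧
  (Finset.univ.filter fun i => y i < x i).card = 2

theorem ExactMove.sum_lt {x y : Fin 3 → ℕ} (h : ExactMove x y) :
    ∑ i, y i < ∑ i, x i := by
  obtain ⟨h1, h2⟩ := h
  obtain ⟨i, hi⟩ := Finset.card_pos.mp (h2 ▸ (by norm_num : (0:ℕ) < 2))
  rw [Finset.mem_filter] at hi
  exact Finset.sum_lt_sum (fun j _ => (h1 j).1) ⟨i, Finset.mem_univ i, hi.2⟩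

/-- The normal-play Sprague–Grundy function of `Nim¹_{3,=2}`:
`G(x) = mex {G(y) : y reachable from x in one move}`. -/
noncomputable def exactG (x : Fin 3 → ℕ) : ℕ :=
  mex (Set.range fun y : {y : Fin 3 → ℕ // ExactMove x y} => exactG y.1)
termination_by ∑ i, x i
decreasing_by exact y.2.sum_lt

open Classical in
/-- The misère Sprague–Grundy function of `Nim¹_{3,=2}`: the same `mex`
recursion at nonterminal positions, and value `1` at terminal positions. -/
noncomputable def exactGm (x : Fin 3 → ℕ) : ℕ :=
  if ∃ y, ExactMove x y then
    mex (Set.range fun y : {y : Fin 3 → ℕ // ExactMove x y} => exactGm y.1)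
  else 1
termination_by ∑ i, x i
decreasing_by exact y.2.sum_lt

/-!
From a position `(0, a, b)` with `a ≤ b` the only move leads to `(0, a - 1, b - 1)`, so the
game is a single path of length `a` ending in a terminal position. Along a path every
`mex` is taken of a singleton, so both Grundy values alternate between `0` and `1`, starting
from `G = 0` and `G⁻ = 1` at the end of the path.
-/

lemma mex_empty : mex (∅ : Set ℕ) = 0 :=
  Nat.sInf_eq_zero.mpr (Or.inl (Set.notMem_empty 0))

lemma mex_singleton (a : ℕ) : mex {a} = if a = 0 then 1 else 0 := by
  unfold mex
  split_ifs with ha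
  · subst ha
    have h1 : (1 : ℕ) ∈ {n : ℕ | n ∉ ({0} : Set ℕ)} := by simp
    refine le_antisymm (Nat.sInf_le h1) ?_
    have hm := Nat.sInf_mem ⟨1, h1⟩
    rw [Set.mem_ofPred_eq, Set.mem_singleton_iff] at hm
    omega
  · exact Nat.sInf_eq_zero.mpr (Or.inl (by simpa using Ne.symm ha))

lemma Set.range_subtype_of_forall_iff_eq {α β : Type*} {p : α → Prop} {a : α}
    (hp : ∀ z, p z ↔ z = a) (f : α → β) :
    Set.range (fun z : Subtype p => f z) = {f a} := by
  ext b
  simp [hp, eq_comm]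

lemma exactMove_iff_of_zero {x y : Fin 3 → ℕ} (h0 : x 0 = 0) :
    ExactMove x y ↔ 0 < x 1 ∧ 0 < x 2 ∧ y = ![0, x 1 - 1, x 2 - 1] := by
  simp only [ExactMove, Finset.card_filter, Fin.sum_univ_three, Fin.forall_fin_succ,
    IsEmpty.forall_iff, and_true, funext_iff]
  simp only [Fin.succ_zero_eq_one, Fin.succ_one_eq_two, Matrix.cons_val_zero,
    Matrix.cons_val_one, Matrix.cons_val_two, Matrix.head_cons, Matrix.tail_cons]
  split_ifs <;> omega

section

variable {x : Fin 3 → ℕ}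

lemma exactG_of_isTerminal (h : ¬ ∃ y, ExactMove x y) : exactG x = 0 := by
  rw [exactG, Set.range_eq_empty_iff.mpr ⟨fun y => h ⟨y.1, y.2⟩⟩, mex_empty]

lemma exactGm_of_isTerminal (h : ¬ ∃ y, ExactMove x y) : exactGm x = 1 := by
  rw [exactGm, if_neg h]

lemma exactG_of_exactMove_iff_eq {y : Fin 3 → ℕ} (h : ∀ z, ExactMove x z ↔ z = y) :
    exactG x = mex {exactG y} := by
  rw [exactG, Set.range_subtype_of_forall_iff_eq h]

lemma exactGm_of_exactMove_iff_eq {y : Fin 3 → ℕ} (h : ∀ z, ExactMove x z ↔ z = y) :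
    exactGm x = mex {exactGm y} := by
  rw [exactGm, if_pos ⟨y, (h y).mpr rfl⟩, Set.range_subtype_of_forall_iff_eq h]

end

lemma exactG_exactGm_of_zero_of_le (x : Fin 3 → ℕ) (h0 : x 0 = 0) (h12 : x 1 ≤ x 2) :
    exactG x = x 1 % 2 ∧ exactGm x = (x 1 + 1) % 2 := by
  induction hn : x 1 generalizing x with
  | zero =>
    have hx : ¬ ∃ y, ExactMove x y := fun ⟨y, hy⟩ => by
      have := (exactMove_iff_of_zero h0).mp hy
      omega
    exact ⟨exactG_of_isTerminal hx, exactGm_of_isTerminal hx⟩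
  | succ n ih =>
    have hmove : ∀ z, ExactMove x z ↔ z = ![0, x 1 - 1, x 2 - 1] := fun z => by
      rw [exactMove_iff_of_zero h0]
      exact ⟨fun h => h.2.2, fun h => ⟨by omega, by omega, h⟩⟩
    obtain ⟨hG, hGm⟩ := ih ![0, x 1 - 1, x 2 - 1] rfl
      (show x 1 - 1 ≤ x 2 - 1 by omega) (show x 1 - 1 = n by omega)
    rw [exactG_of_exactMove_iff_eq hmove, exactGm_of_exactMove_iff_eq hmove, hG, hGm,
      mex_singleton, mex_singleton]
    constructor <;> split_ifs <;> omega

theorem stmt13_general (x : Fin 3 → ℕ) (h12 : x 1 ≤ x 2)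
    (h0 : x 0 = 0) :
    (Even (x 1) → exactG x = 0 ∧ exactGm x = 1) ∧
    (Odd (x 1) → exactG x = 1 ∧ exactGm x = 0) := by
  obtain ⟨hG, hGm⟩ := exactG_exactGm_of_zero_of_le x h0 h12
  refine ⟨fun h => ?_, fun h => ?_⟩
  · rw [Nat.even_iff] at h
    omega
  · rw [Nat.odd_iff] at h
    omega

/-- In `Nim¹_{3,=2}`, a nondecreasing position with smallest coordinate `0`
is a `(0,1)`-position if its middle coordinate is even, and a
`(1,0)`-position if its middle coordinate is odd. -/
theorem stmt13 (x : Fin 3 → ℕ) (h01 : x 0 ≤ x 1) (h12 : x 1 ≤ x 2)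
    (h0 : x 0 = 0) :
    (Even (x 1) → exactG x = 0 ∧ exactGm x = 1) ∧
    (Odd (x 1) → exactG x = 1 ∧ exactGm x = 0) :=
  stmt13_general x h12 h0
end
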